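/- Let Θ have the density f(θ) = Φ(ε(a + bθ − ȳ)/ω)·φ((θ − m)/s) / (s·Φ(ε(a + bm − ȳ)/√(ω² + s²b²))) with s > 0, ω > 0, ε ∈ {+1,−1}. Then E[Θ] = m + ε·b·s²/√(ω² + s²b²) · φ((a + bm − ȳ)/√(ω² + s²b²)) / Φ(ε(a + bm − ȳ)/√(ω² + s²b²)). -/

import Mathlib

/-!
Substituting `θ = m + s u` turns the probit factor into `Φ(α + β u)` with `β = ε b s / ω`, and
reduces the claim to two integrals against the standard normal density `φ`:

* `∫ Φ(α + β u) φ(u) du = Φ(α / √(1 + β²))`: write `Φ(α + β u) = ∫_{v ≤ α} φ(v + β u) dv` and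
  swap the integrals; completing the square, `∫ φ(v + β u) φ(u) du` is the density of
  `N(0, 1 + β²)` at `v`.
* `∫ u Φ(α + β u) φ(u) du = β ∫ φ(α + β u) φ(u) du`: Stein's identity `∫ u g φ = ∫ g' φ`,
  which is integration by parts against `φ' = -u φ`.
-/

open MeasureTheory ProbabilityTheory Real

/-- Standard normal density. -/
noncomputable def stdNormalPDF (z : ℝ) : ℝ := (Real.sqrt (2 * Real.pi))⁻¹ * Real.exp (-z ^ 2 / 2)

/-- Standard normal cumulative distribution function. -/
noncomputable def stdNormalCDF (z : ℝ) : ℝ := ∫ t in Set.Iic z, stdNormalPDF t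

open Set

lemma stdNormalPDF_eq_gaussianPDFReal : stdNormalPDF = gaussianPDFReal 0 1 := by
  ext z; simp [stdNormalPDF, gaussianPDFReal]

lemma stdNormalPDF_pos (z : ℝ) : 0 < stdNormalPDF z := by
  unfold stdNormalPDF; positivity

lemma stdNormalPDF_le (z : ℝ) : stdNormalPDF z ≤ (√(2 * π))⁻¹ :=
  mul_le_of_le_one_right (by positivity) (exp_le_one_iff.2 (by nlinarith [sq_nonneg z]))

lemma stdNormalPDF_neg (z : ℝ) : stdNormalPDF (-z) = stdNormalPDF z := by
  simp [stdNormalPDF]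

@[fun_prop]
lemma continuous_stdNormalPDF : Continuous stdNormalPDF := by
  unfold stdNormalPDF; fun_prop

lemma integrable_stdNormalPDF : Integrable stdNormalPDF := by
  rw [stdNormalPDF_eq_gaussianPDFReal]; exact integrable_gaussianPDFReal 0 1

lemma integral_stdNormalPDF : ∫ z, stdNormalPDF z = 1 := by
  rw [stdNormalPDF_eq_gaussianPDFReal]; exact integral_gaussianPDFReal_eq_one 0 one_ne_zero

lemma integrable_mul_stdNormalPDF : Integrable fun z => z * stdNormalPDF z := by
  refine ((integrable_mul_exp_neg_mul_sq (by norm_num : (0:ℝ) < 1 / 2)).const_mul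
    (√(2 * π))⁻¹).congr (.of_forall fun z => ?_)
  simp only [stdNormalPDF]; ring_nf

lemma hasDerivAt_stdNormalPDF (z : ℝ) : HasDerivAt stdNormalPDF (-z * stdNormalPDF z) z := by
  have h : HasDerivAt (fun z : ℝ => -z ^ 2 / 2) (-z) z := by
    simpa using ((hasDerivAt_pow 2 z).neg.div_const 2).congr_deriv (by ring)
  exact (h.exp.const_mul _).congr_deriv (by unfold stdNormalPDF; ring)

lemma stdNormalCDF_nonneg (z : ℝ) : 0 ≤ stdNormalCDF z :=
  integral_nonneg fun t => (stdNormalPDF_pos t).le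

lemma stdNormalCDF_le_one (z : ℝ) : stdNormalCDF z ≤ 1 :=
  integral_stdNormalPDF ▸ setIntegral_le_integral integrable_stdNormalPDF
    (.of_forall fun t => (stdNormalPDF_pos t).le)

lemma abs_stdNormalCDF_le_one (z : ℝ) : |stdNormalCDF z| ≤ 1 :=
  abs_le.2 ⟨by linarith [stdNormalCDF_nonneg z], stdNormalCDF_le_one z⟩

lemma stdNormalCDF_pos (z : ℝ) : 0 < stdNormalCDF z := by
  rw [stdNormalCDF, setIntegral_pos_iff_support_of_nonneg_ae
    (.of_forall fun t => (stdNormalPDF_pos t).le) integrable_stdNormalPDF.integrableOn,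
    Function.support_eq_univ fun t => (stdNormalPDF_pos t).ne', univ_inter]
  simp

lemma hasDerivAt_stdNormalCDF (z : ℝ) : HasDerivAt stdNormalCDF (stdNormalPDF z) z := by
  have h := (intervalIntegral.integral_hasDerivAt_right (a := 0) (b := z)
    integrable_stdNormalPDF.intervalIntegrable
    (continuous_stdNormalPDF.stronglyMeasurableAtFilter _ _) continuous_stdNormalPDF.continuousAt
    ).const_add (stdNormalCDF 0)
  refine h.congr_of_eventuallyEq (.of_forall fun y => ?_)
  dsimp only
  rw [← intervalIntegral.integral_Iic_sub_Iic integrable_stdNormalPDF.integrableOn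
    integrable_stdNormalPDF.integrableOn, stdNormalCDF, stdNormalCDF]
  ring

@[fun_prop]
lemma continuous_stdNormalCDF : Continuous stdNormalCDF :=
  continuous_iff_continuousAt.2 fun z => (hasDerivAt_stdNormalCDF z).continuousAt

lemma integral_stdNormalPDF_add_mul_mul_stdNormalPDF (α β : ℝ) :
    ∫ u, stdNormalPDF (α + β * u) * stdNormalPDF u
      = stdNormalPDF (α / √(1 + β ^ 2)) / √(1 + β ^ 2) := by
  set c := 1 + β ^ 2
  have hc : 0 < c := by positivity
  have hsq : ∀ u, stdNormalPDF (α + β * u) * stdNormalPDF u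
      = (√(2 * π))⁻¹ * (√(2 * π))⁻¹ * exp (-α ^ 2 / (2 * c))
        * exp (-(c / 2) * (u + β * α / c) ^ 2) := by
    intro u
    simp only [stdNormalPDF]
    rw [mul_mul_mul_comm, mul_assoc (_ * _) (exp _), ← exp_add, ← exp_add]
    congr 2
    simp only [c]; field_simp; ring
  simp_rw [hsq, integral_const_mul,
    integral_add_right_eq_self (fun u => exp (-(c / 2) * u ^ 2)), integral_gaussian,
    stdNormalPDF, div_pow, sq_sqrt hc.le]
  rw [show π / (c / 2) = 2 * π / c by field_simp, sqrt_div (by positivity)]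
  have : 0 < √c := sqrt_pos.2 hc
  field_simp

lemma integrable_mul_mul_stdNormalPDF {g : ℝ → ℝ} {C : ℝ} (hg : AEStronglyMeasurable g)
    (hgC : ∀ x, |g x| ≤ C) : Integrable fun x => x * g x * stdNormalPDF x := by
  simpa only [mul_right_comm] using integrable_mul_stdNormalPDF.mul_bdd hg (.of_forall hgC)

lemma integral_mul_mul_stdNormalPDF {g g' : ℝ → ℝ} {C : ℝ}
    (hg : ∀ x, HasDerivAt g (g' x) x) (hgC : ∀ x, |g x| ≤ C)
    (hg' : Integrable fun x => g' x * stdNormalPDF x) :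
    ∫ x, x * g x * stdNormalPDF x = ∫ x, g' x * stdNormalPDF x := by
  have hgm : AEStronglyMeasurable g :=
    (continuous_iff_continuousAt.2 fun x => (hg x).continuousAt).aestronglyMeasurable
  have hxg := integrable_mul_mul_stdNormalPDF hgm hgC
  have hderiv : ∀ x, HasDerivAt (fun x => g x * stdNormalPDF x)
      (g' x * stdNormalPDF x - x * g x * stdNormalPDF x) x :=
    fun x => ((hg x).mul (hasDerivAt_stdNormalPDF x)).congr_deriv (by ring)
  have h := integral_eq_zero_of_hasDerivAt_of_integrable hderiv (hg'.sub hxg)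
    (integrable_stdNormalPDF.bdd_mul hgm (.of_forall hgC))
  rwa [integral_sub hg' hxg, sub_eq_zero, eq_comm] at h

lemma integral_mul_stdNormalCDF_add_mul_mul_stdNormalPDF (α β : ℝ) :
    ∫ u, u * stdNormalCDF (α + β * u) * stdNormalPDF u
      = β * (stdNormalPDF (α / √(1 + β ^ 2)) / √(1 + β ^ 2)) := by
  have hderiv (u : ℝ) : HasDerivAt (fun u => stdNormalCDF (α + β * u))
      (β * stdNormalPDF (α + β * u)) u := by
    have h := ((hasDerivAt_id u).const_mul β).const_add α
    exact ((hasDerivAt_stdNormalCDF _).comp (h₂ := stdNormalCDF) u h).congr_deriv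
      (by simp [mul_comm])
  have hint : Integrable fun u => β * stdNormalPDF (α + β * u) * stdNormalPDF u := by
    have h := integrable_stdNormalPDF.bdd_mul (c := (√(2 * π))⁻¹) (by fun_prop)
      (.of_forall fun u => (norm_of_nonneg (stdNormalPDF_pos _).le).trans_le
        (stdNormalPDF_le (α + β * u)))
    simpa only [mul_assoc] using h.const_mul β
  rw [integral_mul_mul_stdNormalPDF hderiv (fun u => abs_stdNormalCDF_le_one _) hint]
  simp_rw [mul_assoc, integral_const_mul, integral_stdNormalPDF_add_mul_mul_stdNormalPDF]

lemma integral_comp_mul_add {E : Type*} [NormedAddCommGroup E] [NormedSpace ℝ E] (g : ℝ → E)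
    (a b : ℝ) : ∫ x, g (a * x + b) = |a⁻¹| • ∫ x, g x := by
  rw [Measure.integral_comp_mul_left (fun x => g (x + b)), integral_add_right_eq_self]

lemma stdNormalCDF_sub_div (x m : ℝ) {c : ℝ} (hc : 0 < c) :
    stdNormalCDF ((x - m) / c) = ∫ v in Iic x, stdNormalPDF ((v - m) / c) / c := by
  have h := integral_comp_mul_add
    ((Iic x).indicator fun v => stdNormalPDF ((v - m) / c) / c) c m
  rw [abs_of_pos (inv_pos.2 hc), smul_eq_mul] at h
  rw [← integral_indicator measurableSet_Iic, ← mul_inv_cancel_left₀ hc.ne' (∫ v, _), ← h,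
    ← integral_const_mul, stdNormalCDF, ← integral_indicator measurableSet_Iic]
  congr 1 with w
  have hw : c * w + m ≤ x ↔ w ≤ (x - m) / c := by
    rw [le_div_iff₀ hc]; constructor <;> intro <;> linarith
  simp only [indicator_apply, mem_Iic, hw]
  split_ifs
  · rw [add_sub_cancel_right, mul_div_cancel_left₀ _ hc.ne', mul_div_cancel₀ _ hc.ne']
  · simp

lemma integrable_stdNormalCDF_add_mul_mul_stdNormalPDF (α β : ℝ) :
    Integrable fun u => stdNormalCDF (α + β * u) * stdNormalPDF u :=
  integrable_stdNormalPDF.bdd_mul (by fun_prop) (.of_forall fun _ => abs_stdNormalCDF_le_one _)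

lemma integral_stdNormalCDF_add_mul_mul_stdNormalPDF (α β : ℝ) :
    ∫ u, stdNormalCDF (α + β * u) * stdNormalPDF u = stdNormalCDF (α / √(1 + β ^ 2)) := by
  have hc : 0 < √(1 + β ^ 2) := by positivity
  set F : ℝ → ℝ → ℝ := fun u =>
    (Iic α).indicator fun v => stdNormalPDF (v + β * u) * stdNormalPDF u
  have hF_nonneg (u v : ℝ) : 0 ≤ F u v :=
    indicator_nonneg (fun _ _ => (mul_pos (stdNormalPDF_pos _) (stdNormalPDF_pos _)).le) v
  have hinner (u : ℝ) : ∫ v, F u v = stdNormalCDF (α + β * u) * stdNormalPDF u := by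
    rw [integral_indicator measurableSet_Iic, integral_mul_const]
    simpa using congrArg (· * stdNormalPDF u) (stdNormalCDF_sub_div α (-(β * u)) one_pos).symm
  have hF_int : Integrable (Function.uncurry F) (volume.prod volume) := by
    have hmeas : Measurable (Function.uncurry F) := by
      have hF : Function.uncurry F = {p : ℝ × ℝ | p.2 ∈ Iic α}.indicator
          fun p => stdNormalPDF (p.2 + β * p.1) * stdNormalPDF p.1 := by
        ext ⟨u, v⟩; simp [F, indicator_apply]
      rw [hF]
      exact (by fun_prop : Measurable _).indicator (measurable_snd measurableSet_Iic)
    refine (integrable_prod_iff hmeas.aestronglyMeasurable).2 ⟨.of_forall fun u => ?_, ?_⟩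
    · exact ((integrable_stdNormalPDF.comp_add_right (β * u)).mul_const
        (stdNormalPDF u)).indicator (measurableSet_Iic (a := α))
    · simpa only [Function.uncurry_apply_pair, Real.norm_of_nonneg (hF_nonneg _ _), hinner] using
        integrable_stdNormalCDF_add_mul_mul_stdNormalPDF α β
  have houter (v : ℝ) : ∫ u, F u v
      = (Iic α).indicator (fun v => stdNormalPDF (v / √(1 + β ^ 2)) / √(1 + β ^ 2)) v := by
    by_cases hv : v ∈ Iic α
    · simp only [F, indicator_of_mem hv, integral_stdNormalPDF_add_mul_mul_stdNormalPDF]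
    · simp only [F, indicator_of_notMem hv, integral_zero]
  simp_rw [← hinner]
  rw [integral_integral_swap hF_int]
  simp_rw [houter]
  rw [integral_indicator measurableSet_Iic]
  simpa using (stdNormalCDF_sub_div α 0 hc).symm

lemma integral_mul_stdNormalCDF_mul_stdNormalPDF (m c d : ℝ) {s ω : ℝ} (hs : 0 < s)
    (hω : 0 < ω) :
    ∫ θ, θ * (stdNormalCDF ((c + d * θ) / ω) * stdNormalPDF ((θ - m) / s))
      = s * (m * stdNormalCDF ((c + d * m) / √(ω ^ 2 + s ^ 2 * d ^ 2))
        + s ^ 2 * d / √(ω ^ 2 + s ^ 2 * d ^ 2)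
          * stdNormalPDF ((c + d * m) / √(ω ^ 2 + s ^ 2 * d ^ 2))) := by
  set r := √(ω ^ 2 + s ^ 2 * d ^ 2)
  set α := (c + d * m) / ω
  set β := d * s / ω
  have hr : √(1 + β ^ 2) = r / ω := by
    rw [show 1 + β ^ 2 = (ω ^ 2 + s ^ 2 * d ^ 2) / ω ^ 2 by simp only [β]; field_simp,
      sqrt_div' _ (sq_nonneg ω), sqrt_sq hω.le]
  have hsub (u : ℝ) : (s * u + m) * (stdNormalCDF ((c + d * (s * u + m)) / ω)
        * stdNormalPDF ((s * u + m - m) / s))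
      = s * (u * stdNormalCDF (α + β * u) * stdNormalPDF u)
        + m * (stdNormalCDF (α + β * u) * stdNormalPDF u) := by
    rw [show (c + d * (s * u + m)) / ω = α + β * u by simp only [α, β]; field_simp; ring,
      add_sub_cancel_right, mul_div_cancel_left₀ _ hs.ne']
    ring
  have hint := integrable_mul_mul_stdNormalPDF (g := fun u => stdNormalCDF (α + β * u))
    (by fun_prop) (fun u => abs_stdNormalCDF_le_one _)
  have hcv := integral_comp_mul_add
    (fun θ => θ * (stdNormalCDF ((c + d * θ) / ω) * stdNormalPDF ((θ - m) / s))) s m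
  rw [abs_of_pos (inv_pos.2 hs), smul_eq_mul, eq_inv_mul_iff_mul_eq₀ hs.ne'] at hcv
  rw [← hcv]
  simp_rw [hsub]
  rw [integral_add (hint.const_mul s)
      ((integrable_stdNormalCDF_add_mul_mul_stdNormalPDF α β).const_mul m),
    integral_const_mul, integral_const_mul, integral_mul_stdNormalCDF_add_mul_mul_stdNormalPDF,
    integral_stdNormalCDF_add_mul_mul_stdNormalPDF, hr,
    show α / (r / ω) = (c + d * m) / r by simp only [α]; field_simp]
  simp only [β]
  field_simp
  ring

theorem stmt_15 (m s a b ω ybar : ℝ) (hs : 0 < s) (hω : 0 < ω)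
    (ε : ℝ) (hε : ε = 1 ∨ ε = -1)
    (f : ℝ → ℝ)
    (hf : ∀ θ, f θ = stdNormalCDF (ε * (a + b * θ - ybar) / ω) * stdNormalPDF ((θ - m) / s)
        / (s * stdNormalCDF (ε * (a + b * m - ybar) / Real.sqrt (ω ^ 2 + s ^ 2 * b ^ 2)))) :
    ∫ θ : ℝ, θ * f θ
      = m + ε * b * s ^ 2 / Real.sqrt (ω ^ 2 + s ^ 2 * b ^ 2)
          * (stdNormalPDF ((a + b * m - ybar) / Real.sqrt (ω ^ 2 + s ^ 2 * b ^ 2))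
            / stdNormalCDF (ε * (a + b * m - ybar) / Real.sqrt (ω ^ 2 + s ^ 2 * b ^ 2))) := by
  have hε2 : ε ^ 2 = 1 := by rcases hε with rfl | rfl <;> norm_num
  have hlin (θ : ℝ) : ε * (a + b * θ - ybar) = ε * (a - ybar) + ε * b * θ := by ring
  have hmean := integral_mul_stdNormalCDF_mul_stdNormalPDF m (ε * (a - ybar)) (ε * b) hs hω
  rw [mul_pow, hε2, one_mul] at hmean
  set r := √(ω ^ 2 + s ^ 2 * b ^ 2)
  have hφm : stdNormalPDF ((ε * (a - ybar) + ε * b * m) / r)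
      = stdNormalPDF ((a + b * m - ybar) / r) := by
    rw [← hlin, mul_div_assoc]
    rcases hε with rfl | rfl
    · rw [one_mul]
    · rw [neg_one_mul, stdNormalPDF_neg]
  have hΦ := (stdNormalCDF_pos ((ε * (a - ybar) + ε * b * m) / r)).ne'
  simp_rw [hf, mul_div_assoc', integral_div, hlin, hmean, hφm]
  generalize stdNormalCDF ((ε * (a - ybar) + ε * b * m) / r) = Φ₀ at hΦ ⊢
  field_simp
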